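/- Let λ = max((φ − gᵀh)/‖h‖², 0) for vectors g, h ∈ ℝᵈ with h ≠ 0 and scalar φ. Then the update direction d = g + λh satisfies hᵀd ≥ min(φ, hᵀg); in particular if φ ≥ 0 and the update is θ ← θ − ω·d with step size ω > 0, the first-order decrease of L₁' is at least ω·min(φ, hᵀg) when g = ∇L₂(θ), h = ∇L₁'(θ). -/
import Mathlib


open RealInnerProductSpace

/-- Dynamic-barrier gradient step guarantee in lexicographic optimization: with
`λ = max ((φ − ⟪g, h⟫)/‖h‖², 0)` and update direction `d = g + λ h` (where
`g = ∇L₂(θ)`, `h = ∇L₁'(θ) ≠ 0`), the inner product of the constraint gradient with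
the combined direction satisfies `⟪h, d⟫ ≥ min φ ⟪h, g⟫`, ensuring controlled
first-order progress on the constraint `L₁'`. -/
theorem dynamic_barrier_progress {n : ℕ} (g h : EuclideanSpace ℝ (Fin n))
    (hh : h ≠ 0) (φ : ℝ) :
    min φ ⟪h, g⟫ ≤ ⟪h, g + max ((φ - ⟪g, h⟫) / ‖h‖ ^ 2) 0 • h⟫ := by
  have hn : (0:ℝ) < ‖h‖ ^ 2 := by
    have := norm_pos_iff.mpr hh
    positivity
  rw [inner_add_right, real_inner_smul_right, real_inner_self_eq_norm_sq,
    real_inner_comm g h]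
  set a := (⟪g, h⟫ : ℝ) with ha
  rcases le_or_gt (φ - a) 0 with hc | hc
  · rw [max_eq_right (div_nonpos_of_nonpos_of_nonneg hc hn.le)]
    simp only [zero_mul, add_zero]
    exact min_le_right φ a
  · rw [max_eq_left (div_pos hc hn).le, div_mul_cancel₀ _ hn.ne']
    have : min φ a ≤ φ := min_le_left _ _
    linarith
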